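/- Let Z be a finite set of clauses of rank 0 (i.e., there is no literal l such that l and l* occur in distinct clauses of Z) with the empty clause ⊥ not in Z. Then the formula ⋀Z → ⊥ is not valid; equivalently, there exists a valuation making every clause in Z true. -/

import Mathlib

/-- Propositional formulas over variables indexed by naturals. -/
inductive PropForm where
  | var : Nat → PropForm
  | fls : PropForm
  | tru : PropForm
  | neg : PropForm → PropForm
  | conj : PropForm → PropForm → PropForm
  | disj : PropForm → PropForm → PropForm
deriving DecidableEq

/-- Classical Boolean evaluation of a formula under a valuation. -/
def PropForm.eval (v : Nat → Bool) : PropForm → Bool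
  | .var n => v n
  | .fls => false
  | .tru => true
  | .neg A => !(A.eval v)
  | .conj A B => A.eval v && B.eval v
  | .disj A B => A.eval v || B.eval v

/-- The propositional variables occurring in a formula. -/
def PropForm.vars : PropForm → Finset Nat
  | .var n => {n}
  | .fls => ∅
  | .tru => ∅
  | .neg A => A.vars
  | .conj A B => A.vars ∪ B.vars
  | .disj A B => A.vars ∪ B.vars

/-- A formula is valid iff true under every valuation. -/
def PropForm.Valid (A : PropForm) : Prop := ∀ v : Nat → Bool, A.eval v = true

/-- Literals: a variable or its negation. -/
inductive Lit where
  | pos : Nat → Lit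
  | neg : Nat → Lit
deriving DecidableEq

/-- The complement of a literal. -/
def Lit.compl : Lit → Lit
  | .pos n => .neg n
  | .neg n => .pos n

/-- The variable of a literal. -/
def Lit.var : Lit → Nat
  | .pos n => n
  | .neg n => n

/-- Evaluation of a literal. -/
def Lit.eval (v : Nat → Bool) : Lit → Bool
  | .pos n => v n
  | .neg n => !(v n)

/-- A literal as a formula. -/
def Lit.toForm : Lit → PropForm
  | .pos n => .var n
  | .neg n => .neg (.var n)

/-- A clause (finite set of literals read disjunctively) is satisfied by `v`. -/
def clauseSat (v : Nat → Bool) (C : Finset Lit) : Prop := ∃ l ∈ C, l.eval v = true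

/-- A conjunction of literals (finite set read conjunctively) is satisfied by `v`. -/
def cubeSat (v : Nat → Bool) (C : Finset Lit) : Prop := ∀ l ∈ C, l.eval v = true

def RankZero (Z : Set (Finset Lit)) : Prop :=
  ¬ ∃ l : Lit, ∃ C₁ ∈ Z, ∃ C₂ ∈ Z, C₁ ≠ C₂ ∧ l ∈ C₁ ∧ l.compl ∈ C₂

open Classical in
noncomputable def posVal (Z : Set (Finset Lit)) (n : Nat) : Bool :=
  decide (∃ C ∈ Z, Lit.pos n ∈ C)

theorem posVal_eq_true {Z : Set (Finset Lit)} {C : Finset Lit} (hC : C ∈ Z) {n : Nat}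
    (hn : Lit.pos n ∈ C) : posVal Z n = true := by
  simpa [posVal] using ⟨C, hC, hn⟩

theorem posVal_eq_false {Z : Set (Finset Lit)} (hZ : RankZero Z) {C : Finset Lit} (hC : C ∈ Z)
    (hpos : ∀ n, Lit.pos n ∉ C) {n : Nat} (hn : Lit.neg n ∈ C) : posVal Z n = false := by
  simp only [posVal, decide_eq_false_iff_not]
  rintro ⟨C', hC', hn'⟩
  have hC'C : C' ≠ C := by
    rintro rfl
    exact hpos n hn'
  exact hZ ⟨Lit.pos n, C', hC', C, hC, hC'C, hn', hn⟩

/-- A clause without positive literals is satisfied by any of its negative literals: by rank zero,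
that variable occurs positively in no other clause. -/
theorem clauseSat_posVal {Z : Set (Finset Lit)} (hZ : RankZero Z) {C : Finset Lit} (hC : C ∈ Z)
    (hCne : C.Nonempty) : clauseSat (posVal Z) C := by
  by_cases hpos : ∃ n, Lit.pos n ∈ C
  · obtain ⟨n, hn⟩ := hpos
    exact ⟨.pos n, hn, posVal_eq_true hC hn⟩
  · simp only [not_exists] at hpos
    obtain ⟨l, hl⟩ := hCne
    cases l with
    | pos n => exact absurd hl (hpos n)
    | neg n => exact ⟨.neg n, hl, by simp [Lit.eval, posVal_eq_false hZ hC hpos hl]⟩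

theorem exists_forall_clauseSat {Z : Set (Finset Lit)} (hZ : RankZero Z) (hne : ∅ ∉ Z) :
    ∃ v : Nat → Bool, ∀ C ∈ Z, clauseSat v C :=
  ⟨posVal Z, fun _ hC =>
    clauseSat_posVal hZ hC (Finset.nonempty_iff_ne_empty.mpr fun h => hne (h ▸ hC))⟩

theorem stmt1 (Z : Finset (Finset Lit))
    (h0 : ¬ ∃ l : Lit, ∃ C₁ ∈ Z, ∃ C₂ ∈ Z, C₁ ≠ C₂ ∧ l ∈ C₁ ∧ l.compl ∈ C₂)
    (hne : (∅ : Finset Lit) ∉ Z) :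
    ¬ (∀ v : Nat → Bool, (∀ C ∈ Z, clauseSat v C) → False) ∧
      ∃ v : Nat → Bool, ∀ C ∈ Z, clauseSat v C := by
  obtain ⟨v, hv⟩ := exists_forall_clauseSat (Z := ↑Z) h0 (by simpa using hne)
  exact ⟨fun h => h v hv, v, hv⟩
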